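/- arXiv:2206.06946 — 2 statements merged into one kernel-verified Lean document; each statement's English description precedes it below -/
import Mathlib

section
/- Let E ⊂ ℝ^{2,n+1} be a 2-plane on which the form is positive definite, 𝔻² = {u ∈ E : ⟨u,u⟩ < 1}, and 𝕊ⁿ = {v ∈ E^⊥ : ⟨v,v⟩ = -1}. Then the map Ψ(u,v) = (2/(1-‖u‖²))u + ((1+‖u‖²)/(1-‖u‖²))v is a bijection from 𝔻² × 𝕊ⁿ onto Ĥ^{2,n}. -/
/-- The signature `(2, n+1)` bilinear form on `ℝ^{n+3}`. -/
noncomputable def bform (n : ℕ) (x y : Fin (n + 3) → ℝ) : ℝ :=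
  ∑ i : Fin (n + 3), (if (i : ℕ) < 2 then (1 : ℝ) else -1) * (x i * y i)

/-- The Poincaré model map `Ψ(u,v) = (2/(1-‖u‖²))u + ((1+‖u‖²)/(1-‖u‖²))v`,
where `‖u‖²` denotes `⟨u,u⟩`. -/
noncomputable def Psi (n : ℕ) (p : (Fin (n + 3) → ℝ) × (Fin (n + 3) → ℝ)) :
    Fin (n + 3) → ℝ :=
  (2 / (1 - bform n p.1 p.1)) • p.1 + ((1 + bform n p.1 p.1) / (1 - bform n p.1 p.1)) • p.2

/-!
Positivity on `E` makes `E ∩ E^⊥ = 0`, so (in finite dimension) every `x` splits uniquely as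
`x = w + z` with `w ∈ E`, `z ∈ E^⊥`. Writing `s = ⟨u,u⟩` and `a = 2/(1-s)`, we have
`Ψ(u,v) = a u + (a-1) v` and `a²s - (a-1)² = -1`, so `Ψ` lands in `Ĥ^{2,n}`. Conversely, for
`⟨x,x⟩ = -1` put `c = √(1 + ⟨w,w⟩)`; then `⟨z,z⟩ = -c²` and the unique preimage is
`u = w/(c+1)`, `v = z/c`, since `a - 1 = c` is read off from `⟨z,z⟩ = -(a-1)²`.
-/

lemma bform_comm (n : ℕ) (x y : Fin (n + 3) → ℝ) : bform n x y = bform n y x := by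
  unfold bform
  exact Finset.sum_congr rfl fun _ _ => by ring

lemma bform_add_left (n : ℕ) (x y z : Fin (n + 3) → ℝ) :
    bform n (x + y) z = bform n x z + bform n y z := by
  unfold bform
  rw [← Finset.sum_add_distrib]
  exact Finset.sum_congr rfl fun _ _ => by simp only [Pi.add_apply]; ring

lemma bform_smul_left (n : ℕ) (c : ℝ) (x y : Fin (n + 3) → ℝ) :
    bform n (c • x) y = c * bform n x y := by
  unfold bform
  rw [Finset.mul_sum]
  exact Finset.sum_congr rfl fun _ _ => by simp only [Pi.smul_apply, smul_eq_mul]; ring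

noncomputable def bformBilin (n : ℕ) : LinearMap.BilinForm ℝ (Fin (n + 3) → ℝ) :=
  LinearMap.mk₂ ℝ (bform n) (bform_add_left n) (bform_smul_left n)
    (fun x y z => by rw [bform_comm, bform_add_left, bform_comm n y, bform_comm n z])
    (fun c x y => by rw [bform_comm, bform_smul_left, bform_comm, smul_eq_mul])

lemma bformBilin_isRefl (n : ℕ) : (bformBilin n).IsRefl :=
  fun x y h => (bform_comm n y x).trans h

lemma Submodule.eq_and_eq_of_add_eq_add {R M : Type*} [Ring R] [AddCommGroup M] [Module R M]
    {p q : Submodule R M} (hpq : Disjoint p q) {u u' v v' : M} (hu : u ∈ p) (hu' : u' ∈ p)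
    (hv : v ∈ q) (hv' : v' ∈ q) (h : u + v = u' + v') : u = u' ∧ v = v' := by
  have huv : u - u' = v' - v := by rw [sub_eq_sub_iff_add_eq_add, h, add_comm]
  have hzero : u - u' = 0 :=
    (Submodule.disjoint_def.mp hpq) _ (p.sub_mem hu hu') (huv ▸ q.sub_mem hv' hv)
  exact ⟨sub_eq_zero.mp hzero, (sub_eq_zero.mp (huv ▸ hzero)).symm⟩

open LinearMap (BilinForm)

namespace LinearMap.BilinForm

variable {V : Type*} [AddCommGroup V] [Module ℝ V] {B : BilinForm ℝ V} {E : Submodule ℝ V}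

noncomputable def poincareMap (B : BilinForm ℝ V) (p : V × V) : V :=
  (2 / (1 - B p.1 p.1)) • p.1 + ((1 + B p.1 p.1) / (1 - B p.1 p.1)) • p.2

lemma apply_add_self_of_apply_eq_zero (hB : B.IsRefl) {u v : V} (huv : B u v = 0) :
    B (u + v) (u + v) = B u u + B v v := by
  simp only [map_add, LinearMap.add_apply, huv, hB u v huv]
  ring

lemma poincareMap_eq {u : V} (v : V) (hu : B u u < 1) :
    B.poincareMap (u, v) = (2 / (1 - B u u)) • u + (2 / (1 - B u u) - 1) • v := by
  have : (1 + B u u) / (1 - B u u) = 2 / (1 - B u u) - 1 := by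
    field_simp [(sub_pos.mpr hu).ne']
    ring
  simp only [poincareMap, this]

lemma disjoint_orthogonal_of_pos (hE : ∀ u ∈ E, u ≠ 0 → 0 < B u u) :
    Disjoint E (B.orthogonal E) := by
  refine Submodule.disjoint_def.mpr fun x hx hxo => ?_
  by_contra hne
  exact (hE x hx hne).ne' (hxo x hx)

lemma apply_self_nonneg_of_pos (hE : ∀ u ∈ E, u ≠ 0 → 0 < B u u) {u : V} (hu : u ∈ E) :
    0 ≤ B u u := by
  rcases eq_or_ne u 0 with rfl | hne
  · simp
  · exact (hE u hu hne).le

section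

variable (B E)

def poincareDomain : Set (V × V) :=
  {p | p.1 ∈ E ∧ B p.1 p.1 < 1 ∧ (∀ u ∈ E, B u p.2 = 0) ∧ B p.2 p.2 = -1}

def hyperboloid : Set V := {x | B x x = -1}

end

lemma mapsTo_poincareMap (hB : B.IsRefl) :
    Set.MapsTo B.poincareMap (poincareDomain B E) (hyperboloid B) := by
  rintro ⟨u, v⟩ ⟨hu, hs, hv, hvv⟩
  have h1s : 1 - B u u ≠ 0 := (sub_pos.mpr hs).ne'
  change B (B.poincareMap (u, v)) (B.poincareMap (u, v)) = -1
  rw [poincareMap, apply_add_self_of_apply_eq_zero hB (by simp [hv u hu])]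
  simp only [map_smul, LinearMap.smul_apply, smul_eq_mul, hvv]
  field_simp
  ring

lemma injOn_poincareMap (hE : ∀ u ∈ E, u ≠ 0 → 0 < B u u) :
    Set.InjOn B.poincareMap (poincareDomain B E) := by
  rintro ⟨u, v⟩ ⟨hu, hs, hv, hvv⟩ ⟨u', v'⟩ ⟨hu', hs', hv', hvv'⟩ heq
  dsimp only at hu hs hv hvv hu' hs' hv' hvv'
  have one_le_sub_one {s : ℝ} (hs0 : 0 ≤ s) (hs1 : s < 1) : 1 ≤ 2 / (1 - s) - 1 := by
    rw [le_sub_iff_add_le, le_div_iff₀ (by linarith)]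
    linarith
  rw [poincareMap_eq v hs, poincareMap_eq v' hs'] at heq
  set a := 2 / (1 - B u u)
  set a' := 2 / (1 - B u' u')
  have ha : 1 ≤ a - 1 := one_le_sub_one (apply_self_nonneg_of_pos hE hu) hs
  have ha' : 1 ≤ a' - 1 := one_le_sub_one (apply_self_nonneg_of_pos hE hu') hs'
  obtain ⟨hau, hbv⟩ := Submodule.eq_and_eq_of_add_eq_add (disjoint_orthogonal_of_pos hE)
    (E.smul_mem a hu) (E.smul_mem a' hu') ((B.orthogonal E).smul_mem _ hv)
    ((B.orthogonal E).smul_mem _ hv') heq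
  have hsq : (a - 1) ^ 2 = (a' - 1) ^ 2 := by
    have := congrArg (fun x => B x x) hbv
    simp only [map_smul, LinearMap.smul_apply, smul_eq_mul, hvv, hvv'] at this
    linarith
  have haa : a = a' := by nlinarith
  rw [← haa] at hau hbv
  exact Prod.ext (smul_right_injective V (by linarith) hau)
    (smul_right_injective V (by linarith) hbv)

lemma surjOn_poincareMap [FiniteDimensional ℝ V] (hB : B.IsRefl)
    (hE : ∀ u ∈ E, u ≠ 0 → 0 < B u u) :
    Set.SurjOn B.poincareMap (poincareDomain B E) (hyperboloid B) := by
  intro x hx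
  have hcompl := (isCompl_orthogonal_iff_disjoint hB).mpr (disjoint_orthogonal_of_pos hE)
  have hx_sup : x ∈ E ⊔ B.orthogonal E := hcompl.sup_eq_top ▸ Submodule.mem_top
  obtain ⟨w, hw, z, hz, rfl⟩ := Submodule.mem_sup.mp hx_sup
  have ht := apply_self_nonneg_of_pos hE hw
  obtain ⟨c, hc2, hc1⟩ : ∃ c : ℝ, c ^ 2 = 1 + B w w ∧ 1 ≤ c :=
    ⟨√(1 + B w w), Real.sq_sqrt (by linarith), Real.one_le_sqrt.mpr (by linarith)⟩
  have hzz : B z z = -c ^ 2 := by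
    have : B (w + z) (w + z) = -1 := hx
    rw [apply_add_self_of_apply_eq_zero hB (hz w hw)] at this
    linarith
  have hs : B ((c + 1)⁻¹ • w) ((c + 1)⁻¹ • w) = (c - 1) / (c + 1) := by
    simp only [map_smul, LinearMap.smul_apply, smul_eq_mul, show B w w = c ^ 2 - 1 by linarith]
    field_simp
    ring
  have hs1 : B ((c + 1)⁻¹ • w) ((c + 1)⁻¹ • w) < 1 := by
    rw [hs, div_lt_one (by linarith)]
    linarith
  refine ⟨((c + 1)⁻¹ • w, c⁻¹ • z), ⟨E.smul_mem _ hw, hs1, fun u hu => ?_, ?_⟩, ?_⟩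
  · simp [hz u hu]
  · simp only [map_smul, LinearMap.smul_apply, smul_eq_mul, hzz]
    field_simp
  · have ha : 2 / (1 - (c - 1) / (c + 1)) = c + 1 := by
      field_simp
      ring
    rw [poincareMap_eq _ hs1, hs, ha, add_sub_cancel_right, smul_smul, smul_smul,
      mul_inv_cancel₀ (by linarith), mul_inv_cancel₀ (by linarith), one_smul, one_smul]

theorem bijOn_poincareMap [FiniteDimensional ℝ V] (hB : B.IsRefl)
    (hE : ∀ u ∈ E, u ≠ 0 → 0 < B u u) :
    Set.BijOn B.poincareMap (poincareDomain B E) (hyperboloid B) :=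
  ⟨mapsTo_poincareMap hB, injOn_poincareMap hE, surjOn_poincareMap hB hE⟩

end LinearMap.BilinForm

theorem stmt3_general (n : ℕ) (E : Submodule ℝ (Fin (n + 3) → ℝ))
    (hEpos : ∀ u ∈ E, u ≠ 0 → 0 < bform n u u) :
    Set.BijOn (Psi n)
      {p : (Fin (n + 3) → ℝ) × (Fin (n + 3) → ℝ) |
        p.1 ∈ E ∧ bform n p.1 p.1 < 1 ∧
        (∀ u ∈ E, bform n u p.2 = 0) ∧ bform n p.2 p.2 = -1}
      {x : Fin (n + 3) → ℝ | bform n x x = -1} :=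
  LinearMap.BilinForm.bijOn_poincareMap (bformBilin_isRefl n) hEpos

/-- Let `E ⊂ ℝ^{2,n+1}` be a 2-plane on which the form is positive definite. Then
`Ψ` is a bijection from `𝔻² × 𝕊ⁿ` onto `Ĥ^{2,n}`, where `𝔻² = {u ∈ E : ⟨u,u⟩ < 1}` and
`𝕊ⁿ = {v ∈ E^⊥ : ⟨v,v⟩ = -1}`. -/
theorem stmt3 (n : ℕ) (E : Submodule ℝ (Fin (n + 3) → ℝ))
    (hE2 : Module.finrank ℝ E = 2)
    (hEpos : ∀ u ∈ E, u ≠ 0 → 0 < bform n u u) :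
    Set.BijOn (Psi n)
      {p : (Fin (n + 3) → ℝ) × (Fin (n + 3) → ℝ) |
        p.1 ∈ E ∧ bform n p.1 p.1 < 1 ∧
        (∀ u ∈ E, bform n u p.2 = 0) ∧ bform n p.2 p.2 = -1}
      {x : Fin (n + 3) → ℝ | bform n x x = -1} :=
  stmt3_general n E hEpos
end

section
/- Let X ⊂ Ĥ^{2,n} be an acausal subset (every two distinct points of X are joined by a spacelike geodesic) and fix a Poincaré model Ψ: 𝔻² × 𝕊ⁿ → Ĥ^{2,n} with projection π onto 𝔻². Then π restricted to X is injective, and X is the graph of a function g: π(X) → 𝕊ⁿ which is strictly 1-Lipschitz for the hemispherical metric on 𝔻² and the round metric on 𝕊ⁿ: d_{𝕊ⁿ}(g(u),g(u')) < d_{𝕊²}(u,u') for all distinct u, u' in π(X). Conversely, the graph of any strictly 1-Lipschitz function g: U → 𝕊ⁿ on a subset U ⊆ 𝔻² is an acausal subset of Ĥ^{2,n}. -/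
/-- The round distance on `𝕊ⁿ`: `cos (d(v,v')) = -⟨v,v'⟩`. -/
noncomputable def sphDist (n : ℕ) (v v' : Fin (n + 3) → ℝ) : ℝ :=
  Real.arccos (-(bform n v v'))

/-- The hemispherical distance on `𝔻²` (for the metric `(2/(1+‖u‖²))²|du|²`). -/
noncomputable def hemiDist (n : ℕ) (u u' : Fin (n + 3) → ℝ) : ℝ :=
  Real.arccos ((2 / (1 + bform n u u)) * (2 / (1 + bform n u' u')) * bform n u u' +
    ((1 - bform n u u) / (1 + bform n u u)) * ((1 - bform n u' u') / (1 + bform n u' u')))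

/-- `X` is an acausal subset of `Ĥ^{2,n}`: every two distinct points of `X` are joined by a
spacelike geodesic, i.e. `⟨x,y⟩ < -1`. -/
def Acausal (n : ℕ) (X : Set (Fin (n + 3) → ℝ)) : Prop :=
  (∀ x ∈ X, bform n x x = -1) ∧ ∀ x ∈ X, ∀ y ∈ X, x ≠ y → bform n x y < -1

/-- The point `(u, v)` lies in the Poincaré model `𝔻² × 𝕊ⁿ` associated to `E`. -/
def InModel (n : ℕ) (E : Submodule ℝ (Fin (n + 3) → ℝ))
    (u v : Fin (n + 3) → ℝ) : Prop :=
  u ∈ E ∧ bform n u u < 1 ∧ (∀ w ∈ E, bform n w v = 0) ∧ bform n v v = -1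

lemma bform_expand (n : ℕ) (a b a' b' : ℝ) (u v u' v' : Fin (n + 3) → ℝ) :
    bform n (a • u + b • v) (a' • u' + b' • v') =
      a * a' * bform n u u' + a * b' * bform n u v' + b * a' * bform n v u' +
        b * b' * bform n v v' := by
  simp only [bform, Pi.add_apply, Pi.smul_apply, smul_eq_mul, Finset.mul_sum,
    ← Finset.sum_add_distrib]
  exact Finset.sum_congr rfl fun i _ => by ring

lemma bform_right (n : ℕ) (x : Fin (n + 3) → ℝ) (a b : ℝ) (y z : Fin (n + 3) → ℝ) :
    bform n x (a • y + b • z) = a * bform n x y + b * bform n x z := by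
  simp only [bform, Pi.add_apply, Pi.smul_apply, smul_eq_mul, Finset.mul_sum,
    ← Finset.sum_add_distrib]
  exact Finset.sum_congr rfl fun i _ => by ring

lemma bform_sub_right (n : ℕ) (x y z : Fin (n + 3) → ℝ) :
    bform n x (y - z) = bform n x y - bform n x z := by
  simp only [bform, Pi.sub_apply, ← Finset.sum_sub_distrib]
  exact Finset.sum_congr rfl fun i _ => by ring

lemma bform_smul_smul (n : ℕ) (a b : ℝ) (x y : Fin (n + 3) → ℝ) :
    bform n (a • x) (b • y) = a * b * bform n x y := by
  simp only [bform, Pi.smul_apply, smul_eq_mul, Finset.mul_sum]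
  exact Finset.sum_congr rfl fun i _ => by ring

lemma bform_sub_self (n : ℕ) (x y : Fin (n + 3) → ℝ) :
    bform n (x - y) (x - y) = bform n x x - 2 * bform n x y + bform n y y := by
  have h := bform_expand n 1 (-1) 1 (-1) x y x y
  rw [show (1:ℝ) • x + (-1:ℝ) • y = x - y by module] at h
  rw [bform_comm n y x] at h
  linarith

lemma bform_add_self (n : ℕ) (x y : Fin (n + 3) → ℝ) :
    bform n (x + y) (x + y) = bform n x x + 2 * bform n x y + bform n y y := by
  have h := bform_expand n 1 1 1 1 x y x y
  rw [show (1:ℝ) • x + (1:ℝ) • y = x + y by module] at h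
  rw [bform_comm n y x] at h
  linarith

lemma bform_zero (n : ℕ) : bform n 0 0 = 0 := by simp [bform]

lemma bform_nonpos_of (n : ℕ) (x : Fin (n + 3) → ℝ) (h0 : x 0 = 0) (h1 : x 1 = 0) :
    bform n x x ≤ 0 := by
  apply Finset.sum_nonpos
  intro i _
  by_cases h : (i : ℕ) < 2
  · have : x i = 0 := by
      rcases (by omega : (i : ℕ) = 0 ∨ (i : ℕ) = 1) with h' | h'
      · have : i = (0 : Fin (n + 3)) := Fin.ext (by simp [h'])
        rw [this]; exact h0
      · have : i = (1 : Fin (n + 3)) := Fin.ext (by simp [h'])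
        rw [this]; exact h1
    simp [this]
  · simp only [if_neg h]
    nlinarith [sq_nonneg (x i)]

lemma bform_nonneg_of_mem (n : ℕ) (E : Submodule ℝ (Fin (n + 3) → ℝ))
    (hEpos : ∀ u ∈ E, u ≠ 0 → 0 < bform n u u) (u : Fin (n + 3) → ℝ) (hu : u ∈ E) :
    0 ≤ bform n u u := by
  rcases eq_or_ne u 0 with rfl | h
  · simp [bform_zero]
  · exact (hEpos u hu h).le

lemma negsemidef (n : ℕ) (E : Submodule ℝ (Fin (n + 3) → ℝ))
    (hE2 : Module.finrank ℝ E = 2)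
    (hEpos : ∀ u ∈ E, u ≠ 0 → 0 < bform n u u)
    (w : Fin (n + 3) → ℝ) (hw : ∀ e ∈ E, bform n e w = 0) :
    bform n w w ≤ 0 := by
  by_contra hcon
  push_neg at hcon
  have hw0 : w ≠ 0 := by
    rintro rfl
    rw [bform_zero] at hcon
    exact lt_irrefl 0 hcon
  have hwE : w ∉ E := fun h => by
    have := hw w h
    rw [this] at hcon
    exact lt_irrefl 0 hcon
  have hEw : E ⊓ (ℝ ∙ w) = ⊥ := by
    rw [Submodule.eq_bot_iff]
    intro x hx
    rw [Submodule.mem_inf] at hx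
    obtain ⟨hxE, hxw⟩ := hx
    rw [Submodule.mem_span_singleton] at hxw
    obtain ⟨t, rfl⟩ := hxw
    rcases eq_or_ne t 0 with rfl | ht
    · simp
    · exact absurd ((Submodule.smul_mem_iff _ ht).mp hxE) hwE
  have hdimP : Module.finrank ℝ ↥(E ⊔ (ℝ ∙ w)) = 3 := by
    have h := Submodule.finrank_sup_add_finrank_inf_eq E (ℝ ∙ w)
    rw [hEw, finrank_bot, hE2, finrank_span_singleton hw0] at h
    omega
  set F : (Fin (n + 3) → ℝ) →ₗ[ℝ] ℝ × ℝ :=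
    (LinearMap.proj 0).prod (LinearMap.proj 1) with hF
  have hmemN : ∀ x, x ∈ LinearMap.ker F ↔ x 0 = 0 ∧ x 1 = 0 := by
    intro x
    simp [hF, LinearMap.mem_ker, LinearMap.prod_apply, Prod.ext_iff]
  have hdimN : n + 1 ≤ Module.finrank ℝ ↥(LinearMap.ker F) := by
    have h := LinearMap.finrank_range_add_finrank_ker F
    have h2 : Module.finrank ℝ (LinearMap.range F) ≤ 2 := by
      have := Submodule.finrank_le (LinearMap.range F)
      simpa using this
    rw [Module.finrank_fin_fun] at h
    omega
  have hPN : (E ⊔ (ℝ ∙ w)) ⊓ LinearMap.ker F = ⊥ := by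
    rw [Submodule.eq_bot_iff]
    intro x hx
    rw [Submodule.mem_inf] at hx
    obtain ⟨hxP, hxN⟩ := hx
    rw [Submodule.mem_sup] at hxP
    obtain ⟨e, he, z, hz, rfl⟩ := hxP
    rw [Submodule.mem_span_singleton] at hz
    obtain ⟨t, rfl⟩ := hz
    have h1 : bform n (e + t • w) (e + t • w) =
        bform n e e + t * t * bform n w w := by
      have h := bform_expand n 1 t 1 t e w e w
      rw [show (1:ℝ) • e + t • w = e + t • w by module] at h
      rw [hw e he, bform_comm n w e, hw e he] at h
      linarith
    have h2 : bform n (e + t • w) (e + t • w) ≤ 0 :=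
      bform_nonpos_of n _ ((hmemN _).mp hxN).1 ((hmemN _).mp hxN).2
    have hee : 0 ≤ bform n e e := bform_nonneg_of_mem n E hEpos e he
    have htw : 0 ≤ t * t * bform n w w := mul_nonneg (mul_self_nonneg t) hcon.le
    have he0 : e = 0 := by
      by_contra hne
      have := hEpos e he hne
      nlinarith
    subst he0
    have ht0 : t = 0 := by
      by_contra hne
      have hpos : 0 < t * t * bform n w w := mul_pos (mul_self_pos.mpr hne) hcon
      rw [bform_zero] at h1
      nlinarith
    rw [ht0]
    simp
  have hfin := Submodule.finrank_sup_add_finrank_inf_eq (E ⊔ (ℝ ∙ w)) (LinearMap.ker F)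
  rw [hPN, finrank_bot, hdimP] at hfin
  have hle : Module.finrank ℝ ↥((E ⊔ (ℝ ∙ w)) ⊔ LinearMap.ker F) ≤ n + 3 := by
    have := Submodule.finrank_le ((E ⊔ (ℝ ∙ w)) ⊔ LinearMap.ker F)
    simpa [Module.finrank_fin_fun] using this
  omega

lemma bform_psi_psi (n : ℕ) (u v u' v' : Fin (n + 3) → ℝ)
    (huv' : bform n u v' = 0) (hu'v : bform n u' v = 0) :
    bform n (Psi n (u, v)) (Psi n (u', v')) =
      (2 / (1 - bform n u u)) * (2 / (1 - bform n u' u')) * bform n u u' +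
        ((1 + bform n u u) / (1 - bform n u u)) *
          ((1 + bform n u' u') / (1 - bform n u' u')) * bform n v v' := by
  simp only [Psi]
  rw [bform_expand]
  rw [huv', bform_comm n v u', hu'v]
  ring

lemma bform_psi_self (n : ℕ) (u v : Fin (n + 3) → ℝ)
    (hq1 : bform n u u < 1) (huv : bform n u v = 0) (hv : bform n v v = -1) :
    bform n (Psi n (u, v)) (Psi n (u, v)) = -1 := by
  rw [bform_psi_psi n u v u v huv huv, hv]
  have h : (1 : ℝ) - bform n u u ≠ 0 := by linarith
  field_simp
  ring

/-- The key algebraic equivalence: spacelike separation iff `A < B`. -/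
lemma key_equiv (n : ℕ) (u v u' v' : Fin (n + 3) → ℝ)
    (hq0 : 0 ≤ bform n u u) (hq1 : bform n u u < 1)
    (hq0' : 0 ≤ bform n u' u') (hq1' : bform n u' u' < 1)
    (huv' : bform n u v' = 0) (hu'v : bform n u' v = 0) :
    (bform n (Psi n (u, v)) (Psi n (u', v')) < -1 ↔
      (2 / (1 + bform n u u)) * (2 / (1 + bform n u' u')) * bform n u u' +
        ((1 - bform n u u) / (1 + bform n u u)) *
          ((1 - bform n u' u') / (1 + bform n u' u')) < -(bform n v v')) := by
  rw [bform_psi_psi n u v u' v' huv' hu'v]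
  set q := bform n u u
  set q' := bform n u' u'
  set p := bform n u u'
  set r := bform n v v'
  have hm : (0:ℝ) < 1 - q := by linarith
  have hm' : (0:ℝ) < 1 - q' := by linarith
  have hp : (0:ℝ) < 1 + q := by linarith
  have hp' : (0:ℝ) < 1 + q' := by linarith
  have hd : (0:ℝ) < (1 - q) * (1 - q') := mul_pos hm hm'
  have hd' : (0:ℝ) < (1 + q) * (1 + q') := mul_pos hp hp'
  have e1 : (2 / (1 - q)) * (2 / (1 - q')) * p +
      ((1 + q) / (1 - q)) * ((1 + q') / (1 - q')) * r =
      (4 * p + (1 + q) * (1 + q') * r) / ((1 - q) * (1 - q')) := by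
    field_simp
    ring_nf
  have e2 : (2 / (1 + q)) * (2 / (1 + q')) * p +
      ((1 - q) / (1 + q)) * ((1 - q') / (1 + q')) =
      (4 * p + (1 - q) * (1 - q')) / ((1 + q) * (1 + q')) := by
    field_simp
    ring_nf
  rw [e1, e2, div_lt_iff₀ hd, div_lt_iff₀ hd']
  constructor <;> intro h <;> nlinarith

lemma arccos_lt_arccos' {A B : ℝ} (hA1 : -1 ≤ A) (hA2 : A < 1) (hAB : A < B) :
    Real.arccos B < Real.arccos A := by
  by_cases hB : B ≤ 1
  · exact Real.strictAntiOn_arccos ⟨hA1, hA2.le⟩ ⟨by linarith, hB⟩ hAB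
  · push_neg at hB
    rw [Real.arccos_eq_zero.mpr hB.le]
    exact Real.arccos_pos.mpr hA2

lemma lt_of_arccos_lt {A B : ℝ} (h : Real.arccos B < Real.arccos A) : A < B := by
  by_contra hc
  push_neg at hc
  have hB : -1 < B := by
    by_contra hB
    push_neg at hB
    rw [Real.arccos_eq_pi.mpr hB] at h
    exact absurd h (not_lt.mpr (Real.arccos_le_pi A))
  have : Real.arccos A ≤ Real.arccos B := by
    rw [Real.arccos, Real.arccos]
    have := Real.monotone_arcsin hc
    linarith
  linarith

lemma A_gt_neg_one (n : ℕ) (E : Submodule ℝ (Fin (n + 3) → ℝ))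
    (hEpos : ∀ u ∈ E, u ≠ 0 → 0 < bform n u u)
    (u u' : Fin (n + 3) → ℝ) (hu : u ∈ E) (hu' : u' ∈ E)
    (hq1 : bform n u u < 1) (hq1' : bform n u' u' < 1) :
    -1 < (2 / (1 + bform n u u)) * (2 / (1 + bform n u' u')) * bform n u u' +
      ((1 - bform n u u) / (1 + bform n u u)) *
        ((1 - bform n u' u') / (1 + bform n u' u')) := by
  have hq0 : 0 ≤ bform n u u := bform_nonneg_of_mem n E hEpos u hu
  have hq0' : 0 ≤ bform n u' u' := bform_nonneg_of_mem n E hEpos u' hu'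
  have hsum : 0 ≤ bform n (u + u') (u + u') :=
    bform_nonneg_of_mem n E hEpos _ (E.add_mem hu hu')
  rw [bform_add_self] at hsum
  set q := bform n u u
  set q' := bform n u' u'
  set p := bform n u u'
  have hp : (0:ℝ) < 1 + q := by linarith
  have hp' : (0:ℝ) < 1 + q' := by linarith
  have hd' : (0:ℝ) < (1 + q) * (1 + q') := mul_pos hp hp'
  have e2 : (2 / (1 + q)) * (2 / (1 + q')) * p +
      ((1 - q) / (1 + q)) * ((1 - q') / (1 + q')) =
      (4 * p + (1 - q) * (1 - q')) / ((1 + q) * (1 + q')) := by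
    field_simp
    ring_nf
  rw [e2, lt_div_iff₀ hd']
  nlinarith [mul_pos (show (0:ℝ) < 1 - q by linarith) (show (0:ℝ) < 1 - q' by linarith)]

lemma A_lt_one (n : ℕ) (E : Submodule ℝ (Fin (n + 3) → ℝ))
    (hEpos : ∀ u ∈ E, u ≠ 0 → 0 < bform n u u)
    (u u' : Fin (n + 3) → ℝ) (hu : u ∈ E) (hu' : u' ∈ E)
    (hq1 : bform n u u < 1) (hq1' : bform n u' u' < 1) (hne : u ≠ u') :
    (2 / (1 + bform n u u)) * (2 / (1 + bform n u' u')) * bform n u u' +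
      ((1 - bform n u u) / (1 + bform n u u)) *
        ((1 - bform n u' u') / (1 + bform n u' u')) < 1 := by
  have hq0 : 0 ≤ bform n u u := bform_nonneg_of_mem n E hEpos u hu
  have hq0' : 0 ≤ bform n u' u' := bform_nonneg_of_mem n E hEpos u' hu'
  have hsub : 0 < bform n (u - u') (u - u') :=
    hEpos _ (E.sub_mem hu hu') (sub_ne_zero.mpr hne)
  rw [bform_sub_self] at hsub
  set q := bform n u u
  set q' := bform n u' u'
  set p := bform n u u'
  have hp : (0:ℝ) < 1 + q := by linarith
  have hp' : (0:ℝ) < 1 + q' := by linarith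
  have hd' : (0:ℝ) < (1 + q) * (1 + q') := mul_pos hp hp'
  have e2 : (2 / (1 + q)) * (2 / (1 + q')) * p +
      ((1 - q) / (1 + q)) * ((1 - q') / (1 + q')) =
      (4 * p + (1 - q) * (1 - q')) / ((1 + q) * (1 + q')) := by
    field_simp
    ring_nf
  rw [e2, div_lt_one hd']
  nlinarith

lemma psi_inj (n : ℕ) (E : Submodule ℝ (Fin (n + 3) → ℝ))
    (hEpos : ∀ u ∈ E, u ≠ 0 → 0 < bform n u u)
    (u v u' v' : Fin (n + 3) → ℝ)
    (hm : InModel n E u v) (hm' : InModel n E u' v')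
    (heq : Psi n (u, v) = Psi n (u', v')) : u = u' ∧ v = v' := by
  obtain ⟨huE, hq1, hv, hvv⟩ := hm
  obtain ⟨huE', hq1', hv', hvv'⟩ := hm'
  have hq0 : 0 ≤ bform n u u := bform_nonneg_of_mem n E hEpos u huE
  have hq0' : 0 ≤ bform n u' u' := bform_nonneg_of_mem n E hEpos u' huE'
  set q := bform n u u with hq
  set q' := bform n u' u' with hq'
  set s : ℝ := 2 / (1 - q) with hs
  set t : ℝ := (1 + q) / (1 - q) with ht
  set s' : ℝ := 2 / (1 - q') with hs'
  set t' : ℝ := (1 + q') / (1 - q') with ht'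
  have hm1 : (0:ℝ) < 1 - q := by linarith
  have hm1' : (0:ℝ) < 1 - q' := by linarith
  have hspos : 0 < s := by positivity
  have hspos' : 0 < s' := by positivity
  have htpos : 0 < t := by
    rw [ht]; positivity
  have htpos' : 0 < t' := by
    rw [ht']; positivity
  have hPsiu : Psi n (u, v) = s • u + t • v := rfl
  have hPsiu' : Psi n (u', v') = s' • u' + t' • v' := rfl
  rw [hPsiu, hPsiu'] at heq
  -- for every e in E, bform e (s•u) = bform e (s'•u')
  have hy : ∀ e ∈ E, bform n e (s • u - s' • u') = 0 := by
    intro e he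
    have h1 : bform n e (s • u + t • v) = bform n e (s' • u' + t' • v') := by rw [heq]
    rw [bform_right, bform_right, hv e he, hv' e he] at h1
    have h2 : bform n e (s • u - s' • u') =
        s * bform n e u - s' * bform n e u' := by
      rw [show s • u - s' • u' = s • u + (-s') • u' by module, bform_right]
      ring
    rw [h2]
    linarith
  have hyE : s • u - s' • u' ∈ E := E.sub_mem (E.smul_mem s huE) (E.smul_mem s' huE')
  have hy0 : s • u - s' • u' = 0 := by
    by_contra hne
    have := hEpos _ hyE hne
    have := hy _ hyE
    linarith
  have hsu : s • u = s' • u' := sub_eq_zero.mp hy0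
  have htv : t • v = t' • v' := by
    have := heq
    rw [hsu] at this
    exact add_left_cancel this
  -- deduce t = t'
  have hbt : bform n (t • v) (t • v) = bform n (t' • v') (t' • v') := by rw [htv]
  rw [bform_smul_smul, bform_smul_smul, hvv, hvv'] at hbt
  have htt : t * t = t' * t' := by nlinarith
  have hteq : t = t' := by nlinarith
  -- deduce q = q'
  have hqq : q = q' := by
    rw [ht, ht'] at hteq
    rw [div_eq_div_iff (by linarith) (by linarith)] at hteq
    nlinarith
  have hseq : s = s' := by rw [hs, hs', hqq]
  have huu : u = u' := by
    rw [← hseq] at hsu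
    exact smul_right_injective _ (ne_of_gt hspos) hsu
  have hvv2 : v = v' := by
    rw [← hteq] at htv
    exact smul_right_injective _ (ne_of_gt htpos) htv
  exact ⟨huu, hvv2⟩

/-- Let `X ⊆ Ĥ^{2,n}` be acausal and fix a Poincaré model `Ψ : 𝔻² × 𝕊ⁿ → Ĥ^{2,n}`.
(1) The projection `π` to `𝔻²` is injective on `X`, so `X` is the graph of a function
`g : π(X) → 𝕊ⁿ`; (2) this function is strictly 1-Lipschitz for the hemispherical metric
on `𝔻²` and the round metric on `𝕊ⁿ`; (3) conversely the graph of any strictly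
1-Lipschitz function `g : U → 𝕊ⁿ`, `U ⊆ 𝔻²`, is an acausal subset of `Ĥ^{2,n}`. -/
theorem stmt6 (n : ℕ) (E : Submodule ℝ (Fin (n + 3) → ℝ))
    (hE2 : Module.finrank ℝ E = 2)
    (hEpos : ∀ u ∈ E, u ≠ 0 → 0 < bform n u u)
    (X : Set (Fin (n + 3) → ℝ)) (hX : Acausal n X) :
    (∀ u v u' v' : Fin (n + 3) → ℝ, InModel n E u v → InModel n E u' v' →
      Psi n (u, v) ∈ X → Psi n (u', v') ∈ X → u = u' → v = v') ∧
    (∀ u v u' v' : Fin (n + 3) → ℝ, InModel n E u v → InModel n E u' v' →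
      Psi n (u, v) ∈ X → Psi n (u', v') ∈ X → u ≠ u' →
        sphDist n v v' < hemiDist n u u') ∧
    (∀ (U : Set (Fin (n + 3) → ℝ)) (g : (Fin (n + 3) → ℝ) → (Fin (n + 3) → ℝ)),
      (∀ u ∈ U, u ∈ E ∧ bform n u u < 1) →
      (∀ u ∈ U, (∀ w ∈ E, bform n w (g u) = 0) ∧ bform n (g u) (g u) = -1) →
      (∀ u ∈ U, ∀ u' ∈ U, u ≠ u' → sphDist n (g u) (g u') < hemiDist n u u') →
      Acausal n {x | ∃ u ∈ U, x = Psi n (u, g u)}) := by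
  refine ⟨?_, ?_, ?_⟩
  · -- Part 1: injectivity of the projection
    intro u v u' v' hm hm' hxX hx'X hueq
    subst hueq
    by_cases hPsieq : Psi n (u, v) = Psi n (u, v')
    · exact (psi_inj n E hEpos u v u v' hm hm' hPsieq).2
    · exfalso
      obtain ⟨huE, hq1, hv, hvv⟩ := hm
      obtain ⟨_, _, hv', hvv'⟩ := hm'
      have hq0 : 0 ≤ bform n u u := bform_nonneg_of_mem n E hEpos u huE
      have hlt := hX.2 _ hxX _ hx'X hPsieq
      rw [bform_psi_psi n u v u v' (hv' u huE) (hv u huE)] at hlt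
      set q := bform n u u
      set r' := bform n v v'
      have hm1 : (0:ℝ) < 1 - q := by linarith
      have hid : (2 / (1 - q)) * (2 / (1 - q)) * q -
          ((1 + q) / (1 - q)) * ((1 + q) / (1 - q)) = -1 := by
        field_simp
        ring
      have htsq : 0 < ((1 + q) / (1 - q)) * ((1 + q) / (1 - q)) := by positivity
      have hrlt : r' < -1 := by nlinarith
      -- contradiction with negative semidefiniteness on E-perp
      have hperp : ∀ e ∈ E, bform n e (v - v') = 0 := by
        intro e he
        rw [bform_sub_right, hv e he, hv' e he]
        ring
      have hns := negsemidef n E hE2 hEpos (v - v') hperp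
      rw [bform_sub_self, hvv, hvv'] at hns
      linarith
  · -- Part 2: strict 1-Lipschitz
    intro u v u' v' hm hm' hxX hx'X hne
    have hxne : Psi n (u, v) ≠ Psi n (u', v') := fun h =>
      hne (psi_inj n E hEpos u v u' v' hm hm' h).1
    obtain ⟨huE, hq1, hv, hvv⟩ := hm
    obtain ⟨huE', hq1', hv', hvv'⟩ := hm'
    have hq0 : 0 ≤ bform n u u := bform_nonneg_of_mem n E hEpos u huE
    have hq0' : 0 ≤ bform n u' u' := bform_nonneg_of_mem n E hEpos u' huE'
    have hlt := hX.2 _ hxX _ hx'X hxne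
    have hAB := (key_equiv n u v u' v' hq0 hq1 hq0' hq1'
      (hv' u huE) (hv u' huE')).mp hlt
    rw [sphDist, hemiDist]
    exact arccos_lt_arccos'
      (A_gt_neg_one n E hEpos u u' huE huE' hq1 hq1').le
      (A_lt_one n E hEpos u u' huE huE' hq1 hq1' hne) hAB
  · -- Part 3: converse
    intro U g hU hg hLip
    constructor
    · rintro x ⟨u, huU, rfl⟩
      exact bform_psi_self n u (g u) (hU u huU).2 ((hg u huU).1 u (hU u huU).1)
        (hg u huU).2
    · rintro x ⟨u, huU, rfl⟩ y ⟨u', hu'U, rfl⟩ hxy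
      have hne : u ≠ u' := by
        rintro rfl
        exact hxy rfl
      have hlip := hLip u huU u' hu'U hne
      rw [sphDist, hemiDist] at hlip
      have hAB := lt_of_arccos_lt hlip
      exact (key_equiv n u (g u) u' (g u')
        (bform_nonneg_of_mem n E hEpos u (hU u huU).1) (hU u huU).2
        (bform_nonneg_of_mem n E hEpos u' (hU u' hu'U).1) (hU u' hu'U).2
        ((hg u' hu'U).1 u (hU u huU).1) ((hg u huU).1 u' (hU u' hu'U).1)).mpr hAB
end
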